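/- For all integers m ≥ 3, n ≥ 1 and k ≥ 1, γ_{[k]R}(C_m □ P_n) ≥ (k+1)·mn/5. -/

import Mathlib

open SimpleGraph Finset
open scoped Classical

/-- Closed neighborhood of a vertex. -/
def closedNbr {V : Type*} (G : SimpleGraph V) (v : V) : Set V :=
  insert v (G.neighborSet v)

/-- `S` is an efficient dominating set: every vertex lies in the closed
neighborhood of exactly one vertex of `S`. -/
def IsEffDomSet {V : Type*} (G : SimpleGraph V) (S : Set V) : Prop :=
  ∀ v : V, ∃! u, u ∈ S ∧ v ∈ closedNbr G u

/-- `S` is a dominating set. -/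
def IsDomSet {V : Type*} (G : SimpleGraph V) (S : Set V) : Prop :=
  ∀ v : V, v ∉ S → ∃ u ∈ S, G.Adj u v

/-- The domination number. -/
noncomputable def domNumber {V : Type*} (G : SimpleGraph V) [Fintype V] : ℕ :=
  sInf {n | ∃ S : Set V, IsDomSet G S ∧ S.ncard = n}

/-- `f` is a `[k]`-Roman dominating function on `G`. -/
noncomputable def IsKRDF {V : Type*} (G : SimpleGraph V) [Fintype V] (k : ℕ) (f : V → ℕ) : Prop :=
  (∀ v, f v ≤ k + 1) ∧
  ∀ v : V, f v < k →
    f v + ∑ u ∈ univ.filter (fun u => G.Adj v u), f u ≥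
      k + (univ.filter (fun u => G.Adj v u ∧ 0 < f u)).card

/-- The `[k]`-Roman domination number. -/
noncomputable def kRoman {V : Type*} (G : SimpleGraph V) [Fintype V] (k : ℕ) : ℕ :=
  sInf {w | ∃ f : V → ℕ, IsKRDF G k f ∧ ∑ v, f v = w}

/-- `S` is a packing: closed neighborhoods of vertices in `S` are pairwise disjoint. -/
def IsPacking {V : Type*} (G : SimpleGraph V) (S : Set V) : Prop :=
  S.Pairwise fun u v => Disjoint (closedNbr G u) (closedNbr G v)

/-- The packing number. -/
noncomputable def packingNumber {V : Type*} (G : SimpleGraph V) [Fintype V] : ℕ :=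
  sSup {n | ∃ S : Set V, IsPacking G S ∧ S.ncard = n}

/-!
Write `c(v) = f(N[v])` for a `[k]`-Roman dominating function `f`. Counting each `f u` once for
every vertex of `N[u]` gives `∑ c(v) = ∑ (deg u + 1) f(u) ≤ 5 w(f)` on a graph of maximum degree
4, so it suffices that `∑ c(v) ≥ (k+1)|V|`. The defining inequality gives `c(v) ≥ k + 1` at every
vertex except the deficient ones (`f v = k` with no positive neighbour), where `c(v) = k`. Every
neighbour of a deficient vertex has weight 0, and a weight-0 vertex with `d` deficient neighbours
has `c ≥ k + 1 + d/2`; since deficient vertices have degree at least 2, these halves pay for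
the deficits.
-/

namespace SimpleGraph

variable {V : Type*} [Fintype V] (G : SimpleGraph V)

theorem sum_sum_neighborFinset {M : Type*} [AddCommMonoid M] (g : V → M) :
    ∑ v, ∑ u ∈ G.neighborFinset v, g u = ∑ u, G.degree u • g u := by
  rw [Finset.sum_comm' (s' := fun u => G.neighborFinset u) (t' := univ) (by simp [adj_comm])]
  simp

theorem sum_card_filter_neighborFinset (p : V → Prop) [DecidablePred p] :
    ∑ v, #{u ∈ G.neighborFinset v | p u} = ∑ u with p u, G.degree u := by
  simp_rw [card_filter, sum_sum_neighborFinset, sum_filter, smul_eq_mul, mul_ite, mul_one, mul_zero]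

theorem sum_closedNbr_le {Δ : ℕ} (hmax : ∀ v, G.degree v ≤ Δ) (f : V → ℕ) :
    ∑ v, (f v + ∑ u ∈ G.neighborFinset v, f u) ≤ (Δ + 1) * ∑ v, f v := by
  rw [sum_add_distrib, sum_sum_neighborFinset, mul_sum, ← sum_add_distrib]
  gcongr with v
  have := hmax v
  simp only [smul_eq_mul]
  nlinarith

end SimpleGraph

theorem Finset.sum_filter_pos_eq_sum {α : Type*} (s : Finset α) (f : α → ℕ) :
    ∑ a ∈ s with 0 < f a, f a = ∑ a ∈ s, f a :=
  sum_filter_of_ne fun _ _ ha => Nat.pos_of_ne_zero ha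

section RomanDomination

variable {V : Type*} [Fintype V] {G : SimpleGraph V} {k : ℕ} {f : V → ℕ}

/-- The only vertices where `f(N[v]) ≥ k + 1` can fail; there `f(N[v]) = k`. -/
def IsDeficient (G : SimpleGraph V) (k : ℕ) (f : V → ℕ) (v : V) : Prop :=
  f v = k ∧ ∀ u, G.Adj v u → f u = 0

theorem IsKRDF.add_card_le (hf : IsKRDF G k f) {v : V} (hv : f v < k) :
    k + #{u ∈ G.neighborFinset v | 0 < f u} ≤ f v + ∑ u ∈ G.neighborFinset v, f u := by
  simpa [neighborFinset_eq_filter, filter_filter] using hf.2 v hv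

theorem IsKRDF.card_pos_neighbors_pos (hf : IsKRDF G k f) {v : V} (hv : f v < k) :
    0 < #{u ∈ G.neighborFinset v | 0 < f u} := by
  by_contra h
  have hA : {u ∈ G.neighborFinset v | 0 < f u} = ∅ := card_eq_zero.mp (by omega)
  have := hf.add_card_le hv
  rw [← sum_filter_pos_eq_sum, hA, sum_empty] at this
  omega

theorem IsKRDF.succ_le_of_not_isDeficient (hf : IsKRDF G k f) {v : V}
    (hv : ¬IsDeficient G k f v) :
    k + 1 ≤ f v + ∑ u ∈ G.neighborFinset v, f u := by
  rcases lt_trichotomy (f v) k with hlt | heq | hgt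
  · have := hf.add_card_le hlt
    have := hf.card_pos_neighbors_pos hlt
    omega
  · obtain ⟨u, hvu, hu⟩ : ∃ u, G.Adj v u ∧ f u ≠ 0 := by
      simpa [IsDeficient, heq] using hv
    have : f u ≤ ∑ u ∈ G.neighborFinset v, f u :=
      single_le_sum (fun _ _ => Nat.zero_le _) ((mem_neighborFinset G v u).mpr hvu)
    omega
  · omega

theorem IsKRDF.discharge_of_eq_zero (hf : IsKRDF G k f) (hk : 1 ≤ k) {v : V}
    (hv : f v = 0) :
    2 * (k + 1) + #{u ∈ G.neighborFinset v | IsDeficient G k f u} ≤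
      2 * ∑ u ∈ G.neighborFinset v, f u := by
  set A := {u ∈ G.neighborFinset v | 0 < f u} with hA_def
  have hA : k + #A ≤ ∑ u ∈ G.neighborFinset v, f u := by
    simpa [hv] using hf.add_card_le (v := v) (by omega)
  have hApos : 0 < #A := hf.card_pos_neighbors_pos (by omega)
  have hdA : #{u ∈ G.neighborFinset v | IsDeficient G k f u} ≤ #A := by
    refine card_le_card fun u hu => ?_
    simp only [hA_def, mem_filter] at hu ⊢
    exact ⟨hu.1, by rw [hu.2.1]; omega⟩
  obtain hA2 | hA1 : 2 ≤ #A ∨ #A = 1 := by omega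
  · omega
  obtain ⟨w, hw⟩ := card_eq_one.mp hA1
  -- the single positive neighbour `w` carries `f w ≥ k + 1`, so it is not deficient
  have hsum : ∑ u ∈ G.neighborFinset v, f u = f w := by
    rw [← sum_filter_pos_eq_sum, ← hA_def, hw, sum_singleton]
  have hd : #{u ∈ G.neighborFinset v | IsDeficient G k f u} = 0 := by
    refine card_eq_zero.mpr (filter_eq_empty_iff.mpr fun u hu hdef => ?_)
    have : u ∈ A := mem_filter.mpr ⟨hu, by rw [hdef.1]; omega⟩
    rw [hw, mem_singleton] at this
    subst this
    have := hdef.1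
    omega
  omega

/-- Discharging: a zero vertex passes `1/2` to each deficient neighbour. -/
theorem IsKRDF.discharge (hf : IsKRDF G k f) (hk : 1 ≤ k) (v : V) :
    2 * (k + 1) + #{u ∈ G.neighborFinset v | IsDeficient G k f u} ≤
      2 * (f v + ∑ u ∈ G.neighborFinset v, f u) + 2 * if IsDeficient G k f v then 1 else 0 := by
  by_cases hv : IsDeficient G k f v
  · have hnbr : ∀ u ∈ G.neighborFinset v, f u = 0 :=
      fun u hu => hv.2 u ((mem_neighborFinset G v u).mp hu)
    have hd : #{u ∈ G.neighborFinset v | IsDeficient G k f u} = 0 :=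
      card_eq_zero.mpr (filter_eq_empty_iff.mpr fun u hu hdef => by
        have := hnbr u hu; have := hdef.1; omega)
    rw [sum_eq_zero hnbr, hd, if_pos hv, hv.1]
    omega
  rw [if_neg hv]
  by_cases hv0 : f v = 0
  · have := hf.discharge_of_eq_zero hk hv0
    omega
  · have hd : #{u ∈ G.neighborFinset v | IsDeficient G k f u} = 0 :=
      card_eq_zero.mpr (filter_eq_empty_iff.mpr fun u hu hdef =>
        hv0 (hdef.2 v (G.adj_symm ((mem_neighborFinset G v u).mp hu))))
    have := hf.succ_le_of_not_isDeficient hv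
    omega

theorem IsKRDF.succ_mul_card_le_sum_closedNbr (hf : IsKRDF G k f) (hk : 1 ≤ k)
    (hmin : ∀ v, 2 ≤ G.degree v) :
    (k + 1) * Fintype.card V ≤ ∑ v, (f v + ∑ u ∈ G.neighborFinset v, f u) := by
  have hsum := sum_le_sum fun v (_ : v ∈ univ) => hf.discharge hk v
  have hcount : 2 * #{v | IsDeficient G k f v} ≤
      ∑ v, #{u ∈ G.neighborFinset v | IsDeficient G k f u} := by
    rw [sum_card_filter_neighborFinset, mul_comm, ← smul_eq_mul]
    exact card_nsmul_le_sum _ _ _ fun v _ => hmin v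
  simp only [sum_add_distrib, ← mul_sum, sum_const, card_univ, smul_eq_mul, ← card_filter]
    at hsum
  rw [sum_add_distrib]
  linarith

theorem exists_isKRDF_sum_eq_kRoman (G : SimpleGraph V) (k : ℕ) :
    ∃ f, IsKRDF G k f ∧ ∑ v, f v = kRoman G k :=
  Nat.sInf_mem (s := {w | ∃ f : V → ℕ, IsKRDF G k f ∧ ∑ v, f v = w})
    ⟨_, fun _ => k + 1, ⟨fun _ => le_rfl, fun _ hv => absurd hv (by simp)⟩, rfl⟩

theorem succ_mul_card_le_kRoman (hk : 1 ≤ k) {Δ : ℕ} (hmin : ∀ v, 2 ≤ G.degree v)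
    (hmax : ∀ v, G.degree v ≤ Δ) :
    (k + 1) * Fintype.card V ≤ (Δ + 1) * kRoman G k := by
  obtain ⟨f, hf, hw⟩ := exists_isKRDF_sum_eq_kRoman G k
  rw [← hw]
  exact (hf.succ_mul_card_le_sum_closedNbr hk hmin).trans (G.sum_closedNbr_le hmax f)

end RomanDomination

theorem SimpleGraph.cycleGraph_degree_le_two {n : ℕ} (v : Fin n) :
    (cycleGraph n).degree v ≤ 2 := by
  match n, v with
  | 1, v => simp [cycleGraph_one_eq_bot]
  | n + 2, v => exact cycleGraph_degree_two_le ▸ card_le_two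

theorem SimpleGraph.pathGraph_degree_le_two {n : ℕ} (v : Fin n) : (pathGraph n).degree v ≤ 2 :=
  (degree_le_of_le pathGraph_le_cycleGraph).trans (cycleGraph_degree_le_two v)

theorem stmt10_general (m n k : ℕ) (hm : 3 ≤ m) (hk : 1 ≤ k) :
    (kRoman ((cycleGraph m).boxProd (pathGraph n)) k : ℚ) ≥ (k + 1) * m * n / 5 := by
  obtain ⟨m, rfl⟩ := Nat.exists_eq_add_of_le' hm
  have h := succ_mul_card_le_kRoman (G := (cycleGraph (m + 3)).boxProd (pathGraph n)) hk
    (Δ := 4) (fun v => by simp [degree_boxProd, cycleGraph_degree_three_le])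
    (fun v => by
      have := pathGraph_degree_le_two v.2
      simp only [degree_boxProd, cycleGraph_degree_three_le]
      omega)
  rw [Fintype.card_prod, Fintype.card_fin, Fintype.card_fin] at h
  rw [ge_iff_le, div_le_iff₀ (by norm_num)]
  exact_mod_cast (by linarith : (k + 1) * (m + 3) * n ≤ kRoman _ k * 5)

theorem stmt10 (m n k : ℕ) (hm : 3 ≤ m) (hn : 1 ≤ n) (hk : 1 ≤ k) :
    (kRoman ((cycleGraph m).boxProd (pathGraph n)) k : ℚ) ≥ (k + 1) * m * n / 5 :=
  stmt10_general m n k hm hk
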